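/- arXiv:2108.03889 — 4 statements merged into one kernel-verified Lean document; each statement's English description precedes it below -/
import Mathlib

section
/- Let k ≥ 2 and s be positive integers, and define s(0) = s, s(t+1) = s(t)/gcd(k, s(t)). If T = max over primes q dividing both k and s of ⌈v_q(s)/v_q(k)⌉ (and T = 0 if no such prime exists), where v_q denotes the q-adic valuation, then s(t) equals the largest divisor of s coprime to k for all t ≥ T, and s(T−1) does not (when T ≥ 1). -/
/-- exact stabilization time.  With `s(0) = s`,
`s(t+1) = s(t)/gcd(k, s(t))` and
`T = max over primes q ∣ gcd(k,s) of ⌈v_q(s)/v_q(k)⌉`, the sequence equals the largest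
divisor `L` of `s` coprime to `k` for all `t ≥ T`, and `s(T-1) ≠ L` when `T ≥ 1`. -/
theorem seq_stabilization_time (k s : ℕ) (hk : 2 ≤ k) (hs : 0 < s)
    (f : ℕ → ℕ) (h0 : f 0 = s) (hrec : ∀ t, f (t + 1) = f t / Nat.gcd k (f t))
    (T : ℕ)
    (hT : T = (Nat.primeFactors (Nat.gcd k s)).sup
      (fun q => (s.factorization q + k.factorization q - 1) / k.factorization q))
    (L : ℕ) (hL1 : L ∣ s) (hL2 : Nat.Coprime k L)
    (hL3 : ∀ d : ℕ, d ∣ s → Nat.Coprime k d → d ≤ L) :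
    (∀ t, T ≤ t → f t = L) ∧ (1 ≤ T → f (T - 1) ≠ L) := by
  have hk0 : k ≠ 0 := by omega
  -- positivity and factorization formula
  have key : ∀ t, 0 < f t ∧
      ∀ q, (f t).factorization q = s.factorization q - t * k.factorization q := by
    intro t
    induction t with
    | zero => refine ⟨by simpa [h0] using hs, fun q => by simp [h0]⟩
    | succ t ih =>
      obtain ⟨hpos, hfac⟩ := ih
      have hftne : f t ≠ 0 := hpos.ne'
      have hg : 0 < Nat.gcd k (f t) := Nat.gcd_pos_of_pos_left _ (by omega)
      have hgd : Nat.gcd k (f t) ∣ f t := Nat.gcd_dvd_right _ _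
      have hpos' : 0 < f (t + 1) := by
        rw [hrec]
        exact Nat.div_pos (Nat.le_of_dvd hpos hgd) hg
      refine ⟨hpos', fun q => ?_⟩
      rw [hrec, Nat.factorization_div hgd]
      have hgcdfac : (Nat.gcd k (f t)).factorization q
          = min (k.factorization q) ((f t).factorization q) := by
        rw [Nat.factorization_gcd hk0 hftne]; rfl
      rw [Finsupp.tsub_apply, hgcdfac, hfac q]
      have := hfac q
      set a := s.factorization q
      set b := k.factorization q
      have : (t + 1) * b = t * b + b := by ring
      omega
  -- L divides every f t
  have hLdvd : ∀ t, L ∣ f t := by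
    intro t
    induction t with
    | zero => rw [h0]; exact hL1
    | succ t ih =>
      have hpos := (key t).1
      have hg : 0 < Nat.gcd k (f t) := Nat.gcd_pos_of_pos_left _ (by omega)
      have hgd : Nat.gcd k (f t) ∣ f t := Nat.gcd_dvd_right _ _
      have heq : f (t + 1) * Nat.gcd k (f t) = f t := by
        rw [hrec]; exact Nat.div_mul_cancel hgd
      have hcop : Nat.Coprime (Nat.gcd k (f t)) L :=
        Nat.Coprime.coprime_dvd_left (Nat.gcd_dvd_left _ _) hL2
      have : L ∣ f (t + 1) * Nat.gcd k (f t) := by rw [heq]; exact ih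
      exact (Nat.Coprime.dvd_of_dvd_mul_right (hcop.symm) this)
  -- f t divides s
  have hfdvd : ∀ t, f t ∣ s := by
    intro t
    induction t with
    | zero => rw [h0]
    | succ t ih =>
      have hgd : Nat.gcd k (f t) ∣ f t := Nat.gcd_dvd_right _ _
      exact dvd_trans (by rw [hrec]; exact Nat.div_dvd_of_dvd hgd) ih
  constructor
  · intro t ht
    have hpos := (key t).1
    -- f t coprime to k
    have hcop : Nat.Coprime k (f t) := by
      by_contra hnc
      obtain ⟨p, hp, hpk, hpf⟩ := Nat.Prime.not_coprime_iff_dvd.mp hnc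
      have hb : 1 ≤ k.factorization p := (Nat.Prime.factorization_pos_of_dvd hp hk0 hpk)
      have haf : 1 ≤ (f t).factorization p :=
        Nat.Prime.factorization_pos_of_dvd hp hpos.ne' hpf
      have hfac := (key t).2 p
      set a := s.factorization p with ha
      set b := k.factorization p with hbdef
      have hagt : t * b < a := by omega
      have hps : p ∣ s := dvd_trans hpf (hfdvd t)
      have hmem : p ∈ (Nat.gcd k s).primeFactors := by
        rw [Nat.mem_primeFactors]
        exact ⟨hp, Nat.dvd_gcd hpk hps, Nat.gcd_ne_zero_left hk0⟩
      have hle : (a + b - 1) / b ≤ T := by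
        rw [hT]
        exact Finset.le_sup (f := fun q => (s.factorization q + k.factorization q - 1)
          / k.factorization q) hmem
      -- from hle : a ≤ T * b
      have haT : a ≤ T * b := by
        by_contra hcon
        push_neg at hcon
        have : T + 1 ≤ (a + b - 1) / b := by
          rw [Nat.le_div_iff_mul_le (by omega)]
          have : (T + 1) * b = T * b + b := by ring
          omega
        omega
      have : T * b ≤ t * b := Nat.mul_le_mul_right b ht
      omega
    have h1 : f t ≤ L := hL3 _ (hfdvd t) hcop
    have h2 : L ≤ f t := Nat.le_of_dvd hpos (hLdvd t)
    omega
  · intro hT1 heq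
    have hne : ((Nat.gcd k s).primeFactors).Nonempty := by
      by_contra hemp
      rw [Finset.not_nonempty_iff_eq_empty] at hemp
      rw [hemp] at hT
      simp at hT
      omega
    obtain ⟨q, hqmem, hq⟩ := Finset.exists_mem_eq_sup _ hne
      (fun q => (s.factorization q + k.factorization q - 1) / k.factorization q)
    rw [Nat.mem_primeFactors] at hqmem
    obtain ⟨hqp, hqg, _⟩ := hqmem
    have hqk : q ∣ k := dvd_trans hqg (Nat.gcd_dvd_left _ _)
    have hqs : q ∣ s := dvd_trans hqg (Nat.gcd_dvd_right _ _)
    have ha : 1 ≤ s.factorization q := Nat.Prime.factorization_pos_of_dvd hqp hs.ne' hqs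
    have hb : 1 ≤ k.factorization q := Nat.Prime.factorization_pos_of_dvd hqp hk0 hqk
    have hfac := (key (T - 1)).2 q
    have hpos := (key (T - 1)).1
    set a := s.factorization q
    set b := k.factorization q
    have hTval : T = (a + b - 1) / b := by rw [hT, hq]
    have hTb : T * b ≤ a + b - 1 := by
      rw [hTval]; exact Nat.div_mul_le_self _ _
    have hmul : (T - 1) * b + b = T * b := by
      have : (T - 1 + 1) = T := by omega
      calc (T - 1) * b + b = (T - 1 + 1) * b := by ring
        _ = T * b := by rw [this]
    have hlt : (T - 1) * b < a := by omega
    have hqf : q ∣ f (T - 1) := by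
      rw [Nat.Prime.dvd_iff_one_le_factorization hqp hpos.ne']
      omega
    rw [heq] at hqf
    have : q ∣ Nat.gcd k L := Nat.dvd_gcd hqk hqf
    rw [hL2] at this
    exact hqp.ne_one (Nat.dvd_one.mp this)
end

section
/- Let m, k, p be positive integers with k ≥ 2. Define r(0) = p and r(t+1) = lcm(k·m, r(t))/k. Then there exists t* such that for all t ≥ t*, r(t) = r(t*); i.e., the dimension sequence of a dimension-bounded linear system is eventually constant. -/
/-- the dimension sequence `r(0) = p`, `r(t+1) = lcm(k·m, r(t))/k`
(`m, p ≥ 1`, `k ≥ 2`) is eventually constant. -/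
theorem dim_eventually_constant (m k p : ℕ) (hm : 0 < m) (hk : 2 ≤ k) (hp : 0 < p)
    (r : ℕ → ℕ) (h0 : r 0 = p) (hrec : ∀ t, r (t + 1) = Nat.lcm (k * m) (r t) / k) :
    ∃ tStar : ℕ, ∀ t, tStar ≤ t → r t = r tStar := by
  classical
  have hk0 : 0 < k := lt_of_lt_of_le two_pos hk
  have hpos : ∀ t, 0 < r t := by
    intro t
    induction t with
    | zero => rw [h0]; exact hp
    | succ t ih =>
      rw [hrec]
      have hl : 0 < Nat.lcm (k * m) (r t) :=
        Nat.pos_of_ne_zero (Nat.lcm_ne_zero (Nat.mul_pos hk0 hm).ne' ih.ne')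
      have hkd : k ∣ Nat.lcm (k * m) (r t) :=
        dvd_trans (dvd_mul_right k m) (Nat.dvd_lcm_left _ _)
      exact Nat.div_pos (Nat.le_of_dvd hl hkd) hk0
  have mdvd : ∀ t, m ∣ r (t + 1) := by
    intro t
    rw [hrec]
    obtain ⟨c, hc⟩ := Nat.dvd_lcm_left (k * m) (r t)
    rw [hc, mul_assoc, Nat.mul_div_cancel_left _ hk0]
    exact Dvd.intro c rfl
  have step : ∀ t, r (t + 2) ≤ r (t + 1) := by
    intro t
    obtain ⟨s, hs⟩ := mdvd t
    have hs0 : 0 < s := by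
      have := hpos (t + 1); rw [hs] at this
      rcases Nat.eq_zero_or_pos s with h | h
      · rw [h, mul_zero] at this; exact absurd this (lt_irrefl 0)
      · exact h
    rw [show t + 2 = (t + 1) + 1 from rfl, hrec (t + 1), hs]
    have h1 : Nat.lcm (k * m) (m * s) = m * Nat.lcm k s := by
      rw [mul_comm k m, Nat.lcm_mul_left]
    obtain ⟨d, hd⟩ := Nat.dvd_lcm_left k s
    have hdle : d ≤ s := by
      have hle : Nat.lcm k s ≤ k * s :=
        Nat.le_of_dvd (Nat.mul_pos hk0 hs0)
          (Nat.lcm_dvd (dvd_mul_right k s) (dvd_mul_left s k))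
      rw [hd] at hle
      exact le_of_mul_le_mul_left hle hk0
    rw [h1, hd, show m * (k * d) = k * (m * d) by ring,
      Nat.mul_div_cancel_left _ hk0]
    exact Nat.mul_le_mul_left m hdle
  have anti : ∀ a b, a ≤ b → r (b + 1) ≤ r (a + 1) := by
    intro a b hab
    induction b with
    | zero => rw [Nat.le_zero.mp hab]
    | succ b ih =>
      rcases Nat.eq_or_lt_of_le hab with h | h
      · rw [h]
      · exact le_trans (step b) (ih (Nat.lt_succ_iff.mp h))
  have hS : ∃ n, ∃ t, r (t + 1) = n := ⟨r 1, 0, rfl⟩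
  obtain ⟨t0, ht0⟩ := Nat.find_spec hS
  refine ⟨t0 + 1, fun t ht => ?_⟩
  obtain ⟨u, rfl⟩ : ∃ u, t = u + 1 := ⟨t - 1, by omega⟩
  have h1 : r (u + 1) ≤ r (t0 + 1) := anti t0 u (by omega)
  have h2 : Nat.find hS ≤ r (u + 1) := Nat.find_min' hS ⟨u, rfl⟩
  omega
end

section
/- Let m, n be positive integers with m not dividing n, let d = n/gcd(m,n) > 1, and define r(0) = p, r(t+1) = lcm(n, r(t))·m/n. Then there exists p such that the sequence (r(t)) is unbounded. Conversely, if m divides n, the sequence is bounded for every initial p. -/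
/-!
Write `m = a g`, `n = b g` with `g = gcd(m, n)` and `a`, `b` coprime. Then
`lcm(b g, aʲ g) = b aʲ g`, so the step sends `aʲ g` to `aʲ⁺¹ g`: starting from `p = m` the
dimensions grow geometrically as soon as `a > 1`, which is exactly `m ∤ n`.
If `m ∣ n`, say `n = m k`, the step is `r ↦ lcm(n, r) / k`, a divisor of `lcm(n, r)`; hence every
dimension divides `lcm(n, p)`.
-/

def dimStep (m n r : ℕ) : ℕ := Nat.lcm n r * m / n

lemma dimStep_mul_pow {a b g : ℕ} (hb : 0 < b) (hg : 0 < g) (hab : Nat.Coprime a b) (j : ℕ) :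
    dimStep (a * g) (b * g) (a ^ j * g) = a ^ (j + 1) * g := by
  have hlcm : Nat.lcm (b * g) (a ^ j * g) = b * g * a ^ j := by
    rw [mul_comm b, mul_comm (a ^ j), Nat.lcm_mul_left, (hab.symm.pow_right j).lcm_eq_mul]
    ring
  rw [dimStep, hlcm, show b * g * a ^ j * (a * g) = b * g * (a ^ (j + 1) * g) by ring,
    Nat.mul_div_cancel_left _ (by positivity)]

lemma dimStep_dvd_lcm {m n : ℕ} (hm : 0 < m) (hmn : m ∣ n) (r : ℕ) :
    dimStep m n r ∣ Nat.lcm n r := by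
  obtain ⟨k, rfl⟩ := hmn
  rw [dimStep, mul_comm _ m, Nat.mul_div_mul_left _ _ hm]
  exact Nat.div_dvd_of_dvd ((Dvd.intro_left m rfl).trans (Nat.dvd_lcm_left _ _))

theorem dimStep_orbit_unbounded_of_not_dvd {m n : ℕ} (hm : 0 < m) (hn : 0 < n) (hmn : ¬ m ∣ n)
    {r : ℕ → ℕ} (hr0 : r 0 = m) (hstep : ∀ t, r (t + 1) = dimStep m n (r t)) (B : ℕ) :
    B < r B := by
  obtain ⟨a, b, hab, hma, hnb⟩ := Nat.exists_coprime m n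
  set g := Nat.gcd m n
  have hg : 0 < g := Nat.gcd_pos_of_pos_left n hm
  have hb : 0 < b := Nat.pos_of_mul_pos_right (hnb ▸ hn)
  have ha : 1 < a := by
    by_contra! ha
    interval_cases a
    · omega
    · exact hmn (by rw [hma, one_mul]; exact Nat.gcd_dvd_right m n)
  have horbit : ∀ t, r t = a ^ (t + 1) * g := by
    intro t
    induction t with
    | zero => rw [hr0, hma, pow_one]
    | succ t ih => rw [hstep, ih, hma, hnb]; exact dimStep_mul_pow hb hg hab _
  calc B < a ^ (B + 1) := Nat.lt_pow_self ha |>.trans (Nat.pow_lt_pow_right ha B.lt_succ_self)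
    _ ≤ r B := horbit B ▸ Nat.le_mul_of_pos_right _ hg

theorem dimStep_orbit_dvd_lcm_of_dvd {m n p : ℕ} (hm : 0 < m) (hmn : m ∣ n) {r : ℕ → ℕ}
    (hr0 : r 0 = p) (hstep : ∀ t, r (t + 1) = dimStep m n (r t)) (t : ℕ) :
    r t ∣ Nat.lcm n p := by
  induction t with
  | zero => exact hr0 ▸ Nat.dvd_lcm_right n p
  | succ t ih =>
    exact hstep t ▸ (dimStep_dvd_lcm hm hmn _).trans (Nat.lcm_dvd (Nat.dvd_lcm_left n p) ih)

/-- for `A ∈ M_{m×n}` acting on dimensions by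
`r ↦ lcm(n, r)·m/n`: if `m ∤ n` (so that `d = n/gcd(m,n) > 1`) there is an initial
dimension `p` from which the dimension sequence is unbounded; conversely, if `m ∣ n`
the sequence is bounded for every initial `p`. -/
theorem dim_bounded_iff (m n : ℕ) (hm : 0 < m) (hn : 0 < n) :
    (¬ m ∣ n → 1 < n / Nat.gcd m n →
      ∃ p : ℕ, 0 < p ∧ ∀ r : ℕ → ℕ, r 0 = p →
        (∀ t, r (t + 1) = Nat.lcm n (r t) * m / n) → ∀ B : ℕ, ∃ t, B < r t) ∧
    (m ∣ n → ∀ p : ℕ, 0 < p → ∀ r : ℕ → ℕ, r 0 = p →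
      (∀ t, r (t + 1) = Nat.lcm n (r t) * m / n) → ∃ B : ℕ, ∀ t, r t ≤ B) := by
  refine ⟨fun hmn _ => ⟨m, hm, fun r hr0 hstep B => ?_⟩, fun hmn p hp r hr0 hstep => ?_⟩
  · exact ⟨B, dimStep_orbit_unbounded_of_not_dvd hm hn hmn hr0 hstep B⟩
  · exact ⟨Nat.lcm n p, fun t =>
      Nat.le_of_dvd (Nat.lcm_pos hn hp) (dimStep_orbit_dvd_lcm_of_dvd hm hmn hr0 hstep t)⟩
end

section
/- Let A ∈ M_{m×km} and x ∈ V. Then there exists a monic polynomial q(z) = z^n + c_{n−1} z^{n−1} + ⋯ + c₀ with real coefficients such that q(A) ⃗⋉ x := A^n ⃗⋉ x ⃗∓ c_{n−1} A^{n−1} ⃗⋉ x ⃗∓ ⋯ ⃗∓ c₁ A ⃗⋉ x ⃗∓ c₀ x = 0, i.e., every vector admits an A-annihilator polynomial. -/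
/-!
The iterate `A^i ⃗⋉ x` has `m · p / gcd (k^i m, p)` rows, a non-increasing function of `i`, so it
is constant, say `d`, from some index `N` on. The iterates with index `> N` then all live in `ℝ^d`
and satisfy a linear dependence; normalising its last nonzero coefficient gives a monic
annihilator whose coefficients below `N + 1`, in particular that of `x` itself, vanish. All terms
with a nonzero coefficient have the same dimension `d`, so stretching them to the common dimension
stretches them all by the same factor and preserves the relation.
-/

/-- `x ⊗ 1_t` for a (ℕ-indexed) column vector `x`: entry `i` is `x (i / t)`. -/
def stretch (x : ℕ → ℝ) (t : ℕ) : ℕ → ℝ := fun i => x (i / t)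

/-- `A ⊗ I_c` for a matrix `A` with `m` rows (entries outside the `m*c` rows are 0). -/
def kronId (A : ℕ → ℕ → ℝ) (m c : ℕ) : ℕ → ℕ → ℝ :=
  fun i j => if i < m * c then A (i / c) (j / c) * (if i % c = j % c then (1:ℝ) else 0) else 0

/-- product of a matrix with `s` columns with a vector of length `s`. -/
def mulVecN (M : ℕ → ℕ → ℝ) (s : ℕ) (v : ℕ → ℝ) : ℕ → ℝ :=
  fun i => ∑ j ∈ Finset.range s, M i j * v j

/-- V-product `A ⃗⋉ x` of `A ∈ M_{m×n}` with `x ∈ V_r`: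
`(A ⊗ I_{s/n})(x ⊗ 1_{s/r})` with `s = lcm(n,r)`. -/
def vProd (A : ℕ → ℕ → ℝ) (m n : ℕ) (x : ℕ → ℝ) (r : ℕ) : ℕ → ℝ :=
  mulVecN (kronId A m (Nat.lcm n r / n)) (Nat.lcm n r) (stretch x (Nat.lcm n r / r))

/-- V-addition `x ⃗∓ y` of `x ∈ V_n` and `y ∈ V_r`:
`(x ⊗ 1_{s/n}) + (y ⊗ 1_{s/r})` with `s = lcm(n,r)`. -/
def vAdd (x : ℕ → ℝ) (n : ℕ) (y : ℕ → ℝ) (r : ℕ) : ℕ → ℝ :=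
  fun i => stretch x (Nat.lcm n r / n) i + stretch y (Nat.lcm n r / r) i

/-- semi-tensor product `A ⋉ B` of `A ∈ M_{m×n}` and `B ∈ M_{p×q}`:
`(A ⊗ I_{t/n})(B ⊗ I_{t/p})` with `t = lcm(n,p)`. -/
def stp (A : ℕ → ℕ → ℝ) (m n : ℕ) (B : ℕ → ℕ → ℝ) (p : ℕ) : ℕ → ℕ → ℝ :=
  fun i l => ∑ j ∈ Finset.range (Nat.lcm n p),
    kronId A m (Nat.lcm n p / n) i j * kronId B p (Nat.lcm n p / p) j l

/-- `t`-fold semi-tensor power of `A ∈ M_{m×(k·m)}` (`stpPow A m k 0` is `I_m`,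
and `stpPow A m k (t+1) = A ⋉ stpPow A m k t ∈ M_{m×(k^(t+1)·m)}`). -/
def stpPow (A : ℕ → ℕ → ℝ) (m k : ℕ) : ℕ → (ℕ → ℕ → ℝ)
  | 0 => fun i j => if i = j ∧ i < m then (1:ℝ) else 0
  | t+1 => stp A m (k*m) (stpPow A m k t) m

open Finset

theorem exists_monic_linear_relation {K V : Type*} [DivisionRing K] [AddCommGroup V] [Module K V]
    [Module.Finite K V] (v : ℕ → V) :
    ∃ n, ∃ c : ℕ → K, c n = 1 ∧ ∑ i ∈ range (n + 1), c i • v i = 0 := by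
  obtain ⟨l, hl, hl0⟩ : ∃ l : ℕ →₀ K, Finsupp.linearCombination K v l = 0 ∧ l ≠ 0 := by
    simpa [linearIndependent_iff] using Module.Finite.not_linearIndependent_of_infinite (R := K) v
  have hne : l.support.Nonempty := Finsupp.support_nonempty_iff.2 hl0
  set n := l.support.max' hne
  have hsupp : l.support ⊆ range (n + 1) := fun i hi =>
    mem_range.2 (Nat.lt_succ_of_le (l.support.le_max' i hi))
  refine ⟨n, fun i => (l n)⁻¹ * l i,
    inv_mul_cancel₀ (Finsupp.mem_support_iff.1 (l.support.max'_mem hne)), ?_⟩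
  rw [Finsupp.linearCombination_apply, Finsupp.sum_of_support_subset l hsupp _ (by simp)] at hl
  simp_rw [mul_smul, ← smul_sum, hl, smul_zero]

theorem exists_monic_relation_of_eventually_bounded_support {K : Type*} [DivisionRing K]
    {w : ℕ → ℕ → K} {N d : ℕ} (hw : ∀ i, N ≤ i → ∀ l, d ≤ l → w i l = 0) :
    ∃ n, N ≤ n ∧ ∃ c : ℕ → K, c n = 1 ∧ (∀ i < N, c i = 0) ∧
      ∀ l, ∑ i ∈ range (n + 1), c i * w i l = 0 := by
  obtain ⟨n, c, hcn, hrel⟩ := exists_monic_linear_relation (K := K) fun i (l : Fin d) => w (N + i) l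
  refine ⟨N + n, by omega, fun i => if N ≤ i then c (i - N) else 0, by simp [hcn],
    fun i hi => if_neg (by omega), fun l => ?_⟩
  rw [add_assoc, sum_range_add]
  simp only [Nat.le_add_right, if_true, Nat.add_sub_cancel_left]
  rw [sum_eq_zero fun i hi => by rw [if_neg (by simpa using hi), zero_mul], zero_add]
  by_cases hl : l < d
  · simpa using congrFun hrel ⟨l, hl⟩
  · exact sum_eq_zero fun i _ => by rw [hw _ (by omega) l (by omega), mul_zero]

theorem Nat.lcm_div_left_eq_div_gcd {b : ℕ} (p : ℕ) (hb : 0 < b) :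
    Nat.lcm b p / b = p / Nat.gcd b p := by
  rw [Nat.lcm, Nat.mul_div_assoc b (Nat.gcd_dvd_right b p), Nat.mul_div_cancel_left _ hb]

theorem Nat.lcm_div_le_of_dvd {b c p : ℕ} (hb : 0 < b) (hc : 0 < c) (hp : 0 < p) (hbc : b ∣ c) :
    Nat.lcm c p / c ≤ Nat.lcm b p / b := by
  rw [Nat.lcm_div_left_eq_div_gcd p hb, Nat.lcm_div_left_eq_div_gcd p hc]
  exact Nat.div_le_div_left (Nat.le_of_dvd (Nat.gcd_pos_of_pos_right c hp)
    (Nat.gcd_dvd_gcd_of_dvd_left p hbc)) (Nat.gcd_pos_of_pos_right b hp)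

theorem antitone_lcm_div_pow_mul {a k p : ℕ} (ha : 0 < a) (hk : 0 < k) (hp : 0 < p) :
    Antitone fun i => Nat.lcm (k ^ i * a) p / (k ^ i * a) :=
  antitone_nat_of_succ_le fun i =>
    Nat.lcm_div_le_of_dvd (by positivity) (by positivity) hp
      (Nat.mul_dvd_mul_right (pow_dvd_pow k i.le_succ) a)

theorem vProd_eq_zero_of_le (M : ℕ → ℕ → ℝ) {m n r l : ℕ} (x : ℕ → ℝ)
    (hl : m * (Nat.lcm n r / n) ≤ l) : vProd M m n x r l = 0 := by
  unfold vProd mulVecN kronId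
  exact sum_eq_zero fun _ _ => by rw [if_neg (Nat.not_lt.2 hl), zero_mul]

/-- every vector `x ∈ V_p` admits a (monic) `A`-annihilator polynomial
`q(z) = z^n + c_{n-1}z^{n-1} + ⋯ + c₀` for `A ∈ M_{m×(k·m)}`, i.e. the V-sum
`A^n ⃗⋉ x ⃗∓ c_{n-1} A^{n-1} ⃗⋉ x ⃗∓ ⋯ ⃗∓ c₀ x = 0` (all terms stretched to the
common dimension `D = lcm` of the dimensions of the individual terms). -/
theorem exists_annihilator (m k p : ℕ) (hm : 0 < m) (hk : 0 < k) (hp : 0 < p)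
    (A : ℕ → ℕ → ℝ) (x : ℕ → ℝ) :
    ∃ n : ℕ, 0 < n ∧ ∃ c : ℕ → ℝ, c n = 1 ∧
      ∀ j : ℕ,
        (∑ i ∈ Finset.range (n + 1),
          c i * stretch
            (if i = 0 then (fun l => if l < p then x l else 0)
             else vProd (stpPow A m k i) m (k ^ i * m) x p)
            ((Finset.range (n + 1)).lcm
                (fun i' => if i' = 0 then p
                  else m * (Nat.lcm (k ^ i' * m) p / (k ^ i' * m)))
              / (if i = 0 then p else m * (Nat.lcm (k ^ i * m) p / (k ^ i * m)))) j)
          = 0 := by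
  obtain ⟨N, hN⟩ := WellFoundedLT.antitone_chain_condition (antitone_lcm_div_pow_mul hm hk hp)
  set d := m * (Nat.lcm (k ^ N * m) p / (k ^ N * m))
  have hdim : ∀ i, N ≤ i → m * (Nat.lcm (k ^ i * m) p / (k ^ i * m)) = d := fun i hi => by
    rw [← hN i hi]
  obtain ⟨n, hn, c, hcn, hc, hrel⟩ := exists_monic_relation_of_eventually_bounded_support
    (N := N + 1) (d := d) (w := fun i => vProd (stpPow A m k i) m (k ^ i * m) x p)
    fun i hi l hl => vProd_eq_zero_of_le _ x (by rwa [hdim i (by omega)])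
  refine ⟨n, by omega, c, hcn, fun j => ?_⟩
  set D := (Finset.range (n + 1)).lcm fun i' => if i' = 0 then p
    else m * (Nat.lcm (k ^ i' * m) p / (k ^ i' * m))
  rw [← hrel (j / (D / d))]
  refine sum_congr rfl fun i _ => ?_
  rcases lt_or_ge i (N + 1) with hi | hi
  · rw [hc i hi, zero_mul, zero_mul]
  · have hi0 : i ≠ 0 := by omega
    rw [if_neg hi0, if_neg hi0, hdim i (by omega)]
    rfl
end
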